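/- Let D be a squarefree product of distinct odd primes p_1,...,p_n. For d in the subgroup of Q×/Q×² generated by the p_i, define g_i(d) = (d/p_i) if p_i ∤ d, and g_i(d) = (2D/d / p_i) if p_i | d. Then g_i(d_1)g_i(d_2) = g_i(d_1 d_2) for all d_1, d_2 in this subgroup. -/
import Mathlib


/-- The map `g_i`: the Legendre symbol `(d/pᵢ)` if `pᵢ ∤ d`, and `((2D/d)/pᵢ)` if `pᵢ ∣ d`,
where square classes in the subgroup of `ℚ×/ℚ×²` generated by `p₁, …, pₙ` are represented
by subsets `S` of prime indices with value `∏_{i ∈ S} pᵢ`. -/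
def gMap {n : ℕ} (p : Fin n → ℕ) (hp : ∀ i, (p i).Prime) (D : ℤ) (i : Fin n)
    (S : Finset (Fin n)) : ℤ :=
  if i ∈ S then @legendreSym (p i) ⟨hp i⟩ (2 * D / ∏ j ∈ S, (p j : ℤ))
  else @legendreSym (p i) ⟨hp i⟩ (∏ j ∈ S, (p j : ℤ))

lemma leg_mul_sq {q : ℕ} (hq : q.Prime) (z w : ℤ) (hw : (w : ZMod q) ≠ 0) :
    @legendreSym q ⟨hq⟩ (z * w ^ 2) = @legendreSym q ⟨hq⟩ z := by
  haveI : Fact q.Prime := ⟨hq⟩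
  rw [legendreSym.mul, legendreSym.sq_one' q hw, mul_one]

lemma prod_symmDiff_sq {n : ℕ} (f : Fin n → ℤ) (S₁ S₂ : Finset (Fin n)) :
    (∏ j ∈ S₁, f j) * ∏ j ∈ S₂, f j
      = (∏ j ∈ symmDiff S₁ S₂, f j) * (∏ j ∈ S₁ ∩ S₂, f j) ^ 2 := by
  have h1 : symmDiff S₁ S₂ = (S₁ ∪ S₂) \ (S₁ ∩ S₂) := by
    ext x; simp only [Finset.mem_compl, Finset.mem_symmDiff, Finset.mem_union, Finset.mem_sdiff, Finset.mem_inter]; tauto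
  have h2 : S₁ ∩ S₂ ⊆ S₁ ∪ S₂ := (Finset.inter_subset_left).trans Finset.subset_union_left
  rw [sq, h1, ← mul_assoc, Finset.prod_sdiff h2, Finset.prod_union_inter]

lemma prod_ne_zero_zmod {n : ℕ} (p : Fin n → ℕ) (hp : ∀ i, (p i).Prime)
    (hinj : Function.Injective p) (i : Fin n) (S : Finset (Fin n)) (hiS : i ∉ S) :
    (((∏ j ∈ S, (p j : ℤ)) : ℤ) : ZMod (p i)) ≠ 0 := by
  haveI : Fact (p i).Prime := ⟨hp i⟩
  push_cast
  rw [Finset.prod_ne_zero_iff]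
  intro j hj h0
  rw [ZMod.natCast_eq_zero_iff, Nat.prime_dvd_prime_iff_eq (hp i) (hp j)] at h0
  exact hiS (hinj h0 ▸ hj)

lemma two_ne_zero_zmod {q : ℕ} (hq : q.Prime) (hodd : q % 2 = 1) :
    (2 : ZMod q) ≠ 0 := by
  haveI : Fact q.Prime := ⟨hq⟩
  intro h0
  have hdvd : q ∣ 2 := by
    have := (ZMod.natCast_eq_zero_iff 2 q).mp (by exact_mod_cast h0)
    exact this
  have : q = 2 := (Nat.prime_dvd_prime_iff_eq hq Nat.prime_two).mp hdvd
  omega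

/-- `g_i` is multiplicative on the subgroup of `ℚ×/ℚ×²` generated by the `pᵢ`:
`g_i(d₁) g_i(d₂) = g_i(d₁ d₂)`, the product of square classes being computed via the
symmetric difference of the supporting sets of primes. -/
theorem stmt_5 (n : ℕ) (p : Fin n → ℕ) (hp : ∀ i, (p i).Prime)
    (hodd : ∀ i, p i % 2 = 1) (hinj : Function.Injective p)
    (D : ℤ) (hD : D = ∏ i, (p i : ℤ)) (i : Fin n) (S₁ S₂ : Finset (Fin n)) :
    gMap p hp D i S₁ * gMap p hp D i S₂ = gMap p hp D i (symmDiff S₁ S₂) := by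
  haveI : Fact (p i).Prime := ⟨hp i⟩
  have hdiv : ∀ S : Finset (Fin n),
      2 * D / ∏ j ∈ S, (p j : ℤ) = 2 * ∏ j ∈ Sᶜ, (p j : ℤ) := by
    intro S
    have hD' : D = (∏ j ∈ S, (p j : ℤ)) * ∏ j ∈ Sᶜ, (p j : ℤ) := by
      rw [hD, Finset.prod_mul_prod_compl]
    have hne : (∏ j ∈ S, (p j : ℤ)) ≠ 0 :=
      Finset.prod_ne_zero_iff.mpr fun j _ =>
        Int.natCast_ne_zero.mpr (hp j).pos.ne'
    rw [hD', mul_comm (∏ j ∈ S, (p j : ℤ)), ← mul_assoc, Int.mul_ediv_cancel _ hne]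
  have hmemΔ : ∀ x : Fin n, x ∈ symmDiff S₁ S₂ ↔ (x ∈ S₁ ∧ x ∉ S₂) ∨ (x ∈ S₂ ∧ x ∉ S₁) :=
    fun x => Finset.mem_symmDiff
  have hcompl : (symmDiff S₁ S₂)ᶜ = symmDiff S₁ᶜ S₂ := by
    ext x; simp only [Finset.mem_compl, Finset.mem_symmDiff, Finset.mem_union, Finset.mem_sdiff, Finset.mem_inter]; tauto
  have hcompl2 : symmDiff S₁ᶜ S₂ᶜ = symmDiff S₁ S₂ := by
    ext x; simp only [Finset.mem_compl, Finset.mem_symmDiff, Finset.mem_union, Finset.mem_sdiff, Finset.mem_inter]; tauto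
  have h2 : (2 : ZMod (p i)) ≠ 0 := two_ne_zero_zmod (hp i) (hodd i)
  by_cases h1 : i ∈ S₁ <;> by_cases h2' : i ∈ S₂
  · -- both: i ∉ symmDiff
    have hΔ : i ∉ symmDiff S₁ S₂ := by rw [hmemΔ]; tauto
    simp only [gMap, if_pos h1, if_pos h2', if_neg hΔ, hdiv]
    rw [← legendreSym.mul]
    have key : (2 * ∏ j ∈ S₁ᶜ, (p j : ℤ)) * (2 * ∏ j ∈ S₂ᶜ, (p j : ℤ))
        = (∏ j ∈ symmDiff S₁ S₂, (p j : ℤ))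
          * (2 * ∏ j ∈ S₁ᶜ ∩ S₂ᶜ, (p j : ℤ)) ^ 2 := by
      have := prod_symmDiff_sq (fun j => (p j : ℤ)) S₁ᶜ S₂ᶜ
      rw [hcompl2] at this
      linear_combination 4 * this
    rw [key]
    refine leg_mul_sq (hp i) _ _ ?_
    push_cast
    refine mul_ne_zero h2 ?_
    have := prod_ne_zero_zmod p hp hinj i (S₁ᶜ ∩ S₂ᶜ)
      (fun h => by simp at h; exact h.1 h1)
    push_cast at this
    exact this
  · -- i ∈ S₁, i ∉ S₂ : i ∈ symmDiff
    have hΔ : i ∈ symmDiff S₁ S₂ := by rw [hmemΔ]; tauto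
    simp only [gMap, if_pos h1, if_neg h2', if_pos hΔ, hdiv]
    rw [← legendreSym.mul]
    have key : (2 * ∏ j ∈ S₁ᶜ, (p j : ℤ)) * (∏ j ∈ S₂, (p j : ℤ))
        = (2 * ∏ j ∈ (symmDiff S₁ S₂)ᶜ, (p j : ℤ))
          * (∏ j ∈ S₁ᶜ ∩ S₂, (p j : ℤ)) ^ 2 := by
      have := prod_symmDiff_sq (fun j => (p j : ℤ)) S₁ᶜ S₂
      rw [← hcompl] at this
      linear_combination 2 * this
    rw [key]
    refine leg_mul_sq (hp i) _ _ ?_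
    exact prod_ne_zero_zmod p hp hinj i (S₁ᶜ ∩ S₂) (fun h => by simp at h; exact h.1 h1)
  · -- i ∉ S₁, i ∈ S₂
    have hΔ : i ∈ symmDiff S₁ S₂ := by rw [hmemΔ]; tauto
    simp only [gMap, if_neg h1, if_pos h2', if_pos hΔ, hdiv]
    rw [← legendreSym.mul]
    have hcompl' : (symmDiff S₁ S₂)ᶜ = symmDiff S₁ S₂ᶜ := by
      ext x; simp only [Finset.mem_compl, Finset.mem_symmDiff, Finset.mem_union, Finset.mem_sdiff, Finset.mem_inter]; tauto
    have key : (∏ j ∈ S₁, (p j : ℤ)) * (2 * ∏ j ∈ S₂ᶜ, (p j : ℤ))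
        = (2 * ∏ j ∈ (symmDiff S₁ S₂)ᶜ, (p j : ℤ))
          * (∏ j ∈ S₁ ∩ S₂ᶜ, (p j : ℤ)) ^ 2 := by
      have := prod_symmDiff_sq (fun j => (p j : ℤ)) S₁ S₂ᶜ
      rw [← hcompl'] at this
      linear_combination 2 * this
    rw [key]
    refine leg_mul_sq (hp i) _ _ ?_
    exact prod_ne_zero_zmod p hp hinj i (S₁ ∩ S₂ᶜ) (fun h => by simp at h; exact h1 h.1)
  · -- neither
    have hΔ : i ∉ symmDiff S₁ S₂ := by rw [hmemΔ]; tauto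
    simp only [gMap, if_neg h1, if_neg h2', if_neg hΔ]
    rw [← legendreSym.mul, prod_symmDiff_sq (fun j => (p j : ℤ)) S₁ S₂]
    refine leg_mul_sq (hp i) _ _ ?_
    exact prod_ne_zero_zmod p hp hinj i (S₁ ∩ S₂) (fun h => by simp at h; exact h1 h.1)
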